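/- arXiv:1809.03589 — 3 statements merged into one kernel-verified Lean document; each statement's English description precedes it below -/
import Mathlib

section
/- Let d ≥ 1 and let E be a finite set of size m ≥ 2. If τ random tests are drawn independently, each including every item of E independently with probability 1/(d+1), and τ ≥ C·d^2·log m for a sufficiently large absolute constant C, then the collection of tests is d-disjunct with probability at least 1 - 1/m. -/
open Finset


lemma my_sum_biUnion_le {ι α : Type*} [DecidableEq α] (s : Finset ι) (t : ι → Finset α)
    (g : α → ℝ) (hg : ∀ a, 0 ≤ g a) :
    ∑ a ∈ s.biUnion t, g a ≤ ∑ i ∈ s, ∑ a ∈ t i, g a := by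
  classical
  induction s using Finset.induction_on with
  | empty => simp
  | insert _ _ h ih =>
    rename_i a s
    rw [Finset.biUnion_insert, Finset.sum_insert h]
    have h1 : ∑ x ∈ t a ∪ s.biUnion t, g x
        = ∑ x ∈ t a, g x + ∑ x ∈ s.biUnion t \ t a, g x := by
      rw [← Finset.sum_union Finset.disjoint_sdiff, Finset.union_sdiff_self_eq_union]
    have h2 : ∑ x ∈ s.biUnion t \ t a, g x ≤ ∑ x ∈ s.biUnion t, g x :=
      Finset.sum_le_sum_of_subset_of_nonneg Finset.sdiff_subset (fun i _ _ => hg i)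
    linarith

lemma my_sum_mu {E : Type} [Fintype E] [DecidableEq E] (p : ℝ) :
    ∑ S : Finset E, p ^ S.card * (1 - p) ^ (Fintype.card E - S.card) = 1 := by
  have key := Finset.prod_add (fun _ : E => p) (fun _ : E => (1 - p)) Finset.univ
  simp only [Finset.prod_const] at key
  rw [Finset.powerset_univ] at key
  calc ∑ S : Finset E, p ^ S.card * (1 - p) ^ (Fintype.card E - S.card)
      = ∑ S : Finset E, p ^ S.card * (1 - p) ^ (Finset.univ \ S).card := by
        apply Finset.sum_congr rfl; intro S _; rw [Finset.card_univ_diff]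
    _ = (p + (1 - p)) ^ Finset.univ.card := key.symm
    _ = 1 := by norm_num

lemma my_sum_mu_event {E : Type} [Fintype E] [DecidableEq E] (p : ℝ)
    (x : E) (B : Finset E) (hx : x ∉ B) :
    ∑ S ∈ Finset.univ.filter (fun S : Finset E => x ∈ S ∧ S ∩ B = ∅),
      p ^ S.card * (1 - p) ^ (Fintype.card E - S.card) = p * (1 - p) ^ B.card := by
  have key := Finset.prod_add (fun e : E => if e ∈ B then 0 else p)
    (fun e : E => if e = x then 0 else (1 - p)) Finset.univ
  rw [Finset.powerset_univ] at key
  have hrhs : ∀ S : Finset E,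
      (∏ a ∈ S, (if a ∈ B then (0:ℝ) else p)) *
        ∏ a ∈ Finset.univ \ S, (if a = x then (0:ℝ) else (1 - p))
      = if x ∈ S ∧ S ∩ B = ∅ then p ^ S.card * (1 - p) ^ (Fintype.card E - S.card) else 0 := by
    intro S
    by_cases h : x ∈ S ∧ S ∩ B = ∅
    · rw [if_pos h]
      have h1 : ∏ a ∈ S, (if a ∈ B then (0:ℝ) else p) = p ^ S.card := by
        rw [← Finset.prod_const]
        apply Finset.prod_congr rfl
        intro a ha
        rw [if_neg]
        intro hab
        exact (Finset.eq_empty_iff_forall_notMem.1 h.2 a) (Finset.mem_inter.2 ⟨ha, hab⟩)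
      have h2 : ∏ a ∈ Finset.univ \ S, (if a = x then (0:ℝ) else (1 - p))
          = (1 - p) ^ (Fintype.card E - S.card) := by
        rw [← Finset.card_univ_diff, ← Finset.prod_const]
        apply Finset.prod_congr rfl
        intro a ha
        rw [if_neg]
        rintro rfl
        exact (Finset.mem_sdiff.1 ha).2 h.1
      rw [h1, h2]
    · rw [if_neg h]
      rw [not_and_or] at h
      rcases h with h | h
      · apply mul_eq_zero_of_right
        apply Finset.prod_eq_zero (Finset.mem_sdiff.2 ⟨Finset.mem_univ x, h⟩)
        rw [if_pos rfl]
      · apply mul_eq_zero_of_left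
        obtain ⟨a, ha⟩ := Finset.nonempty_iff_ne_empty.2 h
        apply Finset.prod_eq_zero (Finset.mem_inter.1 ha).1
        rw [if_pos (Finset.mem_inter.1 ha).2]
  have hlhs : ∏ e : E, ((if e ∈ B then (0:ℝ) else p) + (if e = x then (0:ℝ) else (1 - p)))
      = p * (1 - p) ^ B.card := by
    rw [← Finset.prod_subset (Finset.subset_univ (insert x B))
      (by
        intro e _ he
        simp only [Finset.mem_insert, not_or] at he
        rw [if_neg he.2, if_neg he.1]
        ring)]
    rw [Finset.prod_insert hx, if_neg hx, if_pos rfl, add_zero]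
    congr 1
    rw [← Finset.prod_const]
    apply Finset.prod_congr rfl
    intro a ha
    rw [if_pos ha, if_neg, zero_add]
    rintro rfl
    exact hx ha
  rw [Finset.sum_filter, ← hlhs, key]
  apply Finset.sum_congr rfl
  intro S _
  exact (hrhs S).symm

lemma my_sum_W_filter {E : Type} [Fintype E] [DecidableEq E] (p : ℝ) (τ : ℕ)
    (q : Finset E → Prop) [DecidablePred q] :
    ∑ f ∈ Finset.univ.filter (fun f : Fin τ → Finset E => ∀ i, q (f i)),
      ∏ i, (p ^ (f i).card * (1 - p) ^ (Fintype.card E - (f i).card))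
    = (∑ S ∈ Finset.univ.filter q, p ^ S.card * (1 - p) ^ (Fintype.card E - S.card)) ^ τ := by
  have key := Finset.prod_univ_sum (fun _ : Fin τ => Finset.univ.filter q)
    (fun _ (S : Finset E) => p ^ S.card * (1 - p) ^ (Fintype.card E - S.card))
  have hpi : Fintype.piFinset (fun _ : Fin τ => Finset.univ.filter q)
      = Finset.univ.filter (fun f : Fin τ → Finset E => ∀ i, q (f i)) := by
    ext f
    simp [Fintype.mem_piFinset]
  rw [hpi] at key
  rw [← key, Finset.prod_const, Finset.card_univ, Fintype.card_fin]

lemma my_q_lower (d : ℕ) (hd : 1 ≤ d) :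
    1 / (8 * (d:ℝ)) ≤ (1 / ((d:ℝ) + 1)) * (1 - 1 / ((d:ℝ) + 1)) ^ d := by
  have hd1 : (1:ℝ) ≤ d := by exact_mod_cast hd
  have hdpos : (0:ℝ) < d := by linarith
  have h1p : 1 - 1/((d:ℝ)+1) = (d:ℝ)/((d:ℝ)+1) := by field_simp; ring
  have he : (1 + 1/(d:ℝ))^d ≤ 4 := by
    have h2 : (1:ℝ) + 1/(d:ℝ) ≤ Real.exp (1/(d:ℝ)) := by
      have := Real.add_one_le_exp (1/(d:ℝ)); linarith
    calc (1 + 1/(d:ℝ))^d ≤ Real.exp (1/(d:ℝ)) ^ d := by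
          apply pow_le_pow_left₀ (by positivity) h2
      _ = Real.exp ((d:ℝ) * (1/(d:ℝ))) := by rw [Real.exp_nat_mul]
      _ = Real.exp 1 := by rw [mul_one_div, div_self (ne_of_gt hdpos)]
      _ ≤ 4 := by
          have := Real.exp_one_lt_d9
          norm_num at this ⊢
          linarith
  have hq : (1/4 : ℝ) ≤ ((d:ℝ)/((d:ℝ)+1))^d := by
    have hbase : ((d:ℝ)/((d:ℝ)+1)) = (1 + 1/(d:ℝ))⁻¹ := by
      rw [inv_eq_one_div]
      rw [div_eq_div_iff (by linarith) (by positivity)]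
      field_simp
    rw [hbase, inv_pow]
    have hpos : (0:ℝ) < (1 + 1/(d:ℝ))^d := by positivity
    have := one_div_le_one_div_of_le hpos he
    rw [one_div ((1 + 1/(d:ℝ))^d)] at this
    exact this
  have hp : 1/(2*(d:ℝ)) ≤ 1/((d:ℝ)+1) :=
    one_div_le_one_div_of_le (by positivity) (by linarith)
  calc 1/(8*(d:ℝ)) = (1/(2*(d:ℝ))) * (1/4) := by ring
    _ ≤ (1/((d:ℝ)+1)) * (((d:ℝ)/((d:ℝ)+1))^d) :=
        mul_le_mul hp hq (by norm_num) (by positivity)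
    _ = (1 / ((d:ℝ) + 1)) * (1 - 1 / ((d:ℝ) + 1)) ^ d := by rw [h1p]

lemma my_pairs_card (E : Type) [Fintype E] [DecidableEq E] (d : ℕ) (hm : 2 ≤ Fintype.card E) :
    (Finset.univ.filter (fun z : E × Finset E => z.2.card ≤ d ∧ z.1 ∉ z.2)).card
      ≤ Fintype.card E ^ (2*d+1) := by
  have h1 : (Finset.univ.filter (fun z : E × Finset E => z.2.card ≤ d ∧ z.1 ∉ z.2)).card
      ≤ ((Finset.univ : Finset E) ×ˢ Finset.univ.filter (fun B : Finset E => B.card ≤ d)).card := by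
    apply Finset.card_le_card
    intro z hz
    simp only [Finset.mem_filter, Finset.mem_product, Finset.mem_univ, true_and] at hz ⊢
    exact hz.1
  rw [Finset.card_product, Finset.card_univ] at h1
  have h2 : (Finset.univ.filter (fun B : Finset E => B.card ≤ d)).card
      ≤ ∑ k ∈ Finset.range (d+1),(Fintype.card E).choose k := by
    calc (Finset.univ.filter (fun B : Finset E => B.card ≤ d)).card
        ≤ ((Finset.range (d+1)).biUnion (fun k => Finset.univ.powersetCard k)).card := by
          apply Finset.card_le_card
          intro B hB
          simp only [Finset.mem_filter, Finset.mem_univ, true_and] at hB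
          exact Finset.mem_biUnion.2 ⟨B.card, Finset.mem_range.2 (Nat.lt_succ_of_le hB),
            Finset.mem_powersetCard.2 ⟨Finset.subset_univ _, rfl⟩⟩
      _ ≤ ∑ k ∈ Finset.range (d+1), (Finset.univ.powersetCard k).card := Finset.card_biUnion_le
      _ = ∑ k ∈ Finset.range (d+1),(Fintype.card E).choose k := by
          apply Finset.sum_congr rfl
          intro k _
          rw [Finset.card_powersetCard, Finset.card_univ]
  have h3 : ∑ k ∈ Finset.range (d+1),(Fintype.card E).choose k ≤ (d+1) * Fintype.card E ^ d := by
    calc ∑ k ∈ Finset.range (d+1),(Fintype.card E).choose k ≤ ∑ _k ∈ Finset.range (d+1), Fintype.card E ^ d := by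
          apply Finset.sum_le_sum
          intro k hk
          exact le_trans (Nat.choose_le_pow (Fintype.card E) k)
            (Nat.pow_le_pow_right (by omega) (Nat.lt_succ_iff.1 (Finset.mem_range.1 hk)))
      _ = (d+1) * Fintype.card E^d := by rw [Finset.sum_const, Finset.card_range, smul_eq_mul]
  have h4 : d + 1 ≤ Fintype.card E ^ d := le_trans (Nat.lt_two_pow_self (n := d)) (Nat.pow_le_pow_left hm d)
  calc (Finset.univ.filter (fun z : E × Finset E => z.2.card ≤ d ∧ z.1 ∉ z.2)).card
      ≤ Fintype.card E * ((d+1) * Fintype.card E ^ d) := le_trans h1 (Nat.mul_le_mul_left (Fintype.card E) (le_trans h2 h3))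
    _ ≤ Fintype.card E * (Fintype.card E ^ d * Fintype.card E ^ d) := Nat.mul_le_mul_left (Fintype.card E) (Nat.mul_le_mul_right _ h4)
    _ = Fintype.card E ^ (2*d+1) := by ring


/-- `τ ≥ C d² log m` independent random tests (each item included
independently with probability `1/(d+1)`) are `d`-disjunct with probability at least
`1 - 1/m`. -/
theorem random_tests_disjunct_whp :
    ∃ C : ℝ, 0 < C ∧
      ∀ (E : Type) [Fintype E] [DecidableEq E] (d τ : ℕ),
        1 ≤ d → 2 ≤ Fintype.card E →
        C * d ^ 2 * Real.log (Fintype.card E) ≤ τ →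
        1 - 1 / (Fintype.card E : ℝ) ≤
          ∑ f ∈ Finset.univ.filter (fun f : Fin τ → Finset E =>
              ∀ x : E, ∀ B : Finset E, B.card ≤ d → x ∉ B →
                ∃ i, x ∈ f i ∧ f i ∩ B = ∅),
            ∏ i, ((1 / (d + 1) : ℝ) ^ (f i).card *
              (1 - 1 / (d + 1)) ^ (Fintype.card E - (f i).card)) := by
  refine ⟨32, by norm_num, ?_⟩
  intro E _ _ d τ hd hm hτ
  set p : ℝ := 1 / ((d:ℝ) + 1) with hpdef
  have hd1 : (1:ℝ) ≤ d := by exact_mod_cast hd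
  have hp0 : 0 < p := by rw [hpdef]; positivity
  have hp1 : p ≤ 1 := by
    rw [hpdef, div_le_one (by linarith)]; linarith
  have h1p0 : 0 ≤ 1 - p := by linarith
  have hm1 : (2:ℝ) ≤ Fintype.card E := by exact_mod_cast hm
  have hmpos : (0:ℝ) < Fintype.card E := by linarith
  have hW0 : ∀ f : Fin τ → Finset E,
      0 ≤ ∏ i, (p ^ (f i).card * (1 - p) ^ (Fintype.card E - (f i).card)) := by
    intro f
    apply Finset.prod_nonneg
    intro i _
    exact mul_nonneg (pow_nonneg hp0.le _) (pow_nonneg h1p0 _)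
  -- total mass is 1
  have htotal : ∑ f : Fin τ → Finset E,
      ∏ i, (p ^ (f i).card * (1 - p) ^ (Fintype.card E - (f i).card)) = 1 := by
    have key := Finset.prod_univ_sum (fun _ : Fin τ => (Finset.univ : Finset (Finset E)))
      (fun _ (S : Finset E) => p ^ S.card * (1 - p) ^ (Fintype.card E - S.card))
    rw [Fintype.piFinset_univ] at key
    rw [← key]
    calc ∏ _i : Fin τ, ∑ S : Finset E, p ^ S.card * (1 - p) ^ (Fintype.card E - S.card)
        = ∏ _i : Fin τ, (1:ℝ) := by
          apply Finset.prod_congr rfl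
          intro i _
          exact my_sum_mu p
      _ = 1 := Finset.prod_const_one
  have hsplit := Finset.sum_filter_add_sum_filter_not Finset.univ
    (fun f : Fin τ → Finset E => ∀ x : E, ∀ B : Finset E, B.card ≤ d → x ∉ B →
      ∃ i, x ∈ f i ∧ f i ∩ B = ∅)
    (fun f => ∏ i, (p ^ (f i).card * (1 - p) ^ (Fintype.card E - (f i).card)))
  rw [htotal] at hsplit
  -- suffices to bound the bad part
  suffices hbad : ∑ f ∈ Finset.univ.filter (fun f : Fin τ → Finset E =>
      ¬ (∀ x : E, ∀ B : Finset E, B.card ≤ d → x ∉ B → ∃ i, x ∈ f i ∧ f i ∩ B = ∅)),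
      ∏ i, (p ^ (f i).card * (1 - p) ^ (Fintype.card E - (f i).card))
      ≤ 1 / (Fintype.card E : ℝ) by linarith
  -- union bound
  set Pairs : Finset (E × Finset E) :=
    Finset.univ.filter (fun z : E × Finset E => z.2.card ≤ d ∧ z.1 ∉ z.2) with hPairs
  have hsub : Finset.univ.filter (fun f : Fin τ → Finset E =>
      ¬ (∀ x : E, ∀ B : Finset E, B.card ≤ d → x ∉ B → ∃ i, x ∈ f i ∧ f i ∩ B = ∅))
      ⊆ Pairs.biUnion (fun z => Finset.univ.filter
          (fun f : Fin τ → Finset E => ∀ i, ¬ (z.1 ∈ f i ∧ f i ∩ z.2 = ∅))) := by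
    intro f hf
    rw [Finset.mem_filter] at hf
    have hf2 := hf.2
    push_neg at hf2
    obtain ⟨x, B, hB, hxB, hsep⟩ := hf2
    apply Finset.mem_biUnion.2
    refine ⟨(x, B), ?_, ?_⟩
    · rw [hPairs, Finset.mem_filter]
      exact ⟨Finset.mem_univ _, hB, hxB⟩
    · rw [Finset.mem_filter]
      refine ⟨Finset.mem_univ _, fun i => ?_⟩
      rintro ⟨h1, h2⟩
      exact (hsep i h1).ne_empty h2
  have hq8 : 1 / (8 * (d:ℝ)) ≤ p * (1 - p) ^ d := my_q_lower d hd
  have hq0 : 0 < p * (1 - p) ^ d := lt_of_lt_of_le (by positivity) hq8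
  -- per-pair bound
  have hpair : ∀ z ∈ Pairs,
      ∑ f ∈ Finset.univ.filter
          (fun f : Fin τ → Finset E => ∀ i, ¬ (z.1 ∈ f i ∧ f i ∩ z.2 = ∅)),
        ∏ i, (p ^ (f i).card * (1 - p) ^ (Fintype.card E - (f i).card))
      ≤ Real.exp (-((τ:ℝ) * (p * (1 - p) ^ d))) := by
    rintro ⟨x, B⟩ hz
    rw [hPairs, Finset.mem_filter] at hz
    obtain ⟨-, hB, hxB⟩ := hz
    rw [my_sum_W_filter p τ (fun S : Finset E => ¬ (x ∈ S ∧ S ∩ B = ∅))]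
    have hev := my_sum_mu_event p x B hxB
    have hsplit2 := Finset.sum_filter_add_sum_filter_not Finset.univ
      (fun S : Finset E => x ∈ S ∧ S ∩ B = ∅)
      (fun S => p ^ S.card * (1 - p) ^ (Fintype.card E - S.card))
    rw [my_sum_mu p, hev] at hsplit2
    have hrw : ∑ S ∈ Finset.univ.filter (fun S : Finset E => ¬ (x ∈ S ∧ S ∩ B = ∅)),
        p ^ S.card * (1 - p) ^ (Fintype.card E - S.card) = 1 - p * (1 - p) ^ B.card := by
      linarith
    rw [hrw]
    have hmono : (1 - p) ^ d ≤ (1 - p) ^ B.card :=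
      pow_le_pow_of_le_one h1p0 (by linarith) hB
    have hle1 : p * (1 - p) ^ B.card ≤ 1 :=
      mul_le_one₀ hp1 (pow_nonneg h1p0 _) (pow_le_one₀ h1p0 (by linarith))
    have e1 : 0 ≤ 1 - p * (1 - p) ^ B.card := by linarith
    have e2 : 1 - p * (1 - p) ^ B.card ≤ Real.exp (-(p * (1 - p) ^ d)) := by
      have h3 : p * (1 - p) ^ d ≤ p * (1 - p) ^ B.card :=
        mul_le_mul_of_nonneg_left hmono hp0.le
      have h4 := Real.add_one_le_exp (-(p * (1 - p) ^ d))
      linarith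
    calc (1 - p * (1 - p) ^ B.card) ^ τ
        ≤ (Real.exp (-(p * (1 - p) ^ d))) ^ τ := pow_le_pow_left₀ e1 e2 τ
      _ = Real.exp (-((τ:ℝ) * (p * (1 - p) ^ d))) := by
          rw [← Real.exp_nat_mul]
          ring_nf
  -- count pairs
  have hNnat := my_pairs_card E d hm
  have hN : (Pairs.card : ℝ) ≤ (Fintype.card E : ℝ) ^ (2*d+1) := by
    rw [hPairs]
    exact_mod_cast hNnat
  -- log computation
  have hlog : ((2*d+2 : ℕ) : ℝ) * Real.log (Fintype.card E) ≤ (τ:ℝ) * (p * (1 - p) ^ d) := by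
    have hlm : 0 ≤ Real.log (Fintype.card E) := Real.log_nonneg (by linarith)
    have hτ0 : (0:ℝ) ≤ τ := Nat.cast_nonneg τ
    calc ((2*d+2 : ℕ) : ℝ) * Real.log (Fintype.card E)
        ≤ 4 * (d:ℝ) * Real.log (Fintype.card E) := by
          push_cast
          nlinarith
      _ = (32 * (d:ℝ)^2 * Real.log (Fintype.card E)) * (1 / (8 * (d:ℝ))) := by
          field_simp
          ring
      _ ≤ (τ:ℝ) * (p * (1 - p) ^ d) :=
          mul_le_mul hτ hq8 (by positivity) hτ0
  have hexp : (Fintype.card E : ℝ) ^ (2*d+2) ≤ Real.exp ((τ:ℝ) * (p * (1 - p) ^ d)) := by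
    have h5 : (Fintype.card E : ℝ) ^ (2*d+2)
        = Real.exp (((2*d+2 : ℕ) : ℝ) * Real.log (Fintype.card E)) := by
      calc (Fintype.card E : ℝ) ^ (2*d+2)
          = Real.exp (Real.log (Fintype.card E)) ^ (2*d+2) := by
            rw [Real.exp_log hmpos]
        _ = Real.exp (((2*d+2 : ℕ) : ℝ) * Real.log (Fintype.card E)) :=
            (Real.exp_nat_mul _ _).symm
    rw [h5]
    exact Real.exp_le_exp.2 hlog
  -- put everything together
  calc ∑ f ∈ Finset.univ.filter (fun f : Fin τ → Finset E =>
        ¬ (∀ x : E, ∀ B : Finset E, B.card ≤ d → x ∉ B → ∃ i, x ∈ f i ∧ f i ∩ B = ∅)),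
        ∏ i, (p ^ (f i).card * (1 - p) ^ (Fintype.card E - (f i).card))
      ≤ ∑ f ∈ Pairs.biUnion (fun z => Finset.univ.filter
          (fun f : Fin τ → Finset E => ∀ i, ¬ (z.1 ∈ f i ∧ f i ∩ z.2 = ∅))),
        ∏ i, (p ^ (f i).card * (1 - p) ^ (Fintype.card E - (f i).card)) :=
        Finset.sum_le_sum_of_subset_of_nonneg hsub (fun f _ _ => hW0 f)
    _ ≤ ∑ z ∈ Pairs, ∑ f ∈ Finset.univ.filter
          (fun f : Fin τ → Finset E => ∀ i, ¬ (z.1 ∈ f i ∧ f i ∩ z.2 = ∅)),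
        ∏ i, (p ^ (f i).card * (1 - p) ^ (Fintype.card E - (f i).card)) :=
        my_sum_biUnion_le _ _ _ hW0
    _ ≤ ∑ _z ∈ Pairs, Real.exp (-((τ:ℝ) * (p * (1 - p) ^ d))) :=
        Finset.sum_le_sum hpair
    _ = (Pairs.card : ℝ) * Real.exp (-((τ:ℝ) * (p * (1 - p) ^ d))) := by
        rw [Finset.sum_const, nsmul_eq_mul]
    _ ≤ (Fintype.card E : ℝ) ^ (2*d+1) * Real.exp (-((τ:ℝ) * (p * (1 - p) ^ d))) :=
        mul_le_mul_of_nonneg_right hN (Real.exp_nonneg _)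
    _ ≤ (Fintype.card E : ℝ) ^ (2*d+1) * ((Fintype.card E : ℝ) ^ (2*d+2))⁻¹ := by
        rw [Real.exp_neg]
        apply mul_le_mul_of_nonneg_left _ (by positivity)
        exact inv_anti₀ (by positivity) hexp
    _ = 1 / (Fintype.card E : ℝ) := by
        rw [show 2*d+2 = (2*d+1)+1 by ring, pow_succ]
        field_simp
        ring
end

section
/- Let G be a D-regular graph with edge set E of size m. If T is a d-disjunct collection of connected-subgraph tests with d ≥ 2D - 2, then T must contain the singleton test {e} for every edge e ∈ E; in particular |T| ≥ m. -/
open scoped Classical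

/-- A connected-subgraph test: the subgraph `(N(T), T)` is connected, i.e. all
vertices incident to an edge of `T` are pairwise reachable using the edges of `T`. -/
def ConnTest {V : Type*} (T : Finset (Sym2 V)) : Prop :=
  ∀ u ∈ (SimpleGraph.fromEdgeSet (↑T : Set (Sym2 V))).support,
    ∀ v ∈ (SimpleGraph.fromEdgeSet (↑T : Set (Sym2 V))).support,
      (SimpleGraph.fromEdgeSet (↑T : Set (Sym2 V))).Reachable u v

/-!
A test `T` containing the edge `e = uv` and avoiding every other edge at `u` or `v` can only be
`{e}`: a walk in `T` leaving `{u, v}` would have to use an edge at `u` or `v` other than `e`.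
There are at most `deg u + deg v - 2 = 2D - 2 ≤ d` such edges, so `d`-disjunctness produces a test
containing `e` and avoiding all of them, that is, the singleton test `{e}`.
-/

open Finset

namespace ConnTest

variable {V : Type*}

theorem eq_singleton_of_isolated {T : Finset (Sym2 V)} {e : Sym2 V}
    (hT : ConnTest T) (hdiag : ∀ f ∈ T, ¬f.IsDiag) (he : e ∈ T)
    (hiso : ∀ f ∈ T, ∀ w ∈ e, w ∈ f → f = e) :
    T = {e} := by
  set H := SimpleGraph.fromEdgeSet (T : Set (Sym2 V))
  have hadj {x y : V} (hxy : s(x, y) ∈ T) : H.Adj x y :=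
    (SimpleGraph.fromEdgeSet_adj _).2 ⟨hxy, fun h => hdiag _ hxy (Sym2.mk_isDiag_iff.2 h)⟩
  induction e using Sym2.ind with | _ u v => ?_
  have hsupport : ∀ w ∈ H.support, w ∈ s(u, v) := by
    intro w hw
    by_contra hwe
    obtain ⟨p⟩ := hT u ⟨v, hadj he⟩ w hw
    obtain ⟨d, -, hd_fst, hd_snd⟩ :=
      p.exists_boundary_dart {x | x ∈ s(u, v)} (Sym2.mem_mk_left u v) hwe
    have hd : s(d.fst, d.snd) = s(u, v) :=
      hiso _ ((SimpleGraph.fromEdgeSet_adj _).1 d.adj).1 _ hd_fst (Sym2.mem_mk_left _ _)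
    exact hd_snd (hd ▸ Sym2.mem_mk_right _ _)
  refine eq_singleton_iff_unique_mem.2 ⟨he, fun f hf => ?_⟩
  induction f using Sym2.ind with
  | _ a b => exact hiso _ hf a (hsupport a ⟨b, hadj hf⟩) (Sym2.mem_mk_left a b)

end ConnTest

namespace SimpleGraph

variable {V : Type*} [Fintype V] [DecidableEq V] (G : SimpleGraph V)

def IsDisjunct (d : ℕ) (𝒯 : Finset (Finset (Sym2 V))) : Prop :=
  ∀ e ∈ G.edgeFinset, ∀ B ⊆ G.edgeFinset, B.card ≤ d → e ∉ B →
    ∃ T ∈ 𝒯, e ∈ T ∧ T ∩ B = ∅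

noncomputable def lineGraphNeighborFinset (u v : V) : Finset (Sym2 V) :=
  (G.incidenceFinset u ∪ G.incidenceFinset v).erase s(u, v)

variable {G}

theorem lineGraphNeighborFinset_subset_edgeFinset (u v : V) :
    G.lineGraphNeighborFinset u v ⊆ G.edgeFinset :=
  (erase_subset _ _).trans <|
    union_subset (G.incidenceFinset_subset u) (G.incidenceFinset_subset v)

theorem mem_lineGraphNeighborFinset {u v w : V} {f : Sym2 V} (hf : f ∈ G.edgeSet)
    (hw : w ∈ s(u, v)) (hwf : w ∈ f) (hne : f ≠ s(u, v)) :
    f ∈ G.lineGraphNeighborFinset u v := by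
  refine mem_erase.2 ⟨hne, mem_union.2 ?_⟩
  rcases Sym2.mem_iff.1 hw with rfl | rfl
  · exact Or.inl ((G.mem_incidenceFinset _ _).2 ⟨hf, hwf⟩)
  · exact Or.inr ((G.mem_incidenceFinset _ _).2 ⟨hf, hwf⟩)

theorem card_lineGraphNeighborFinset_le {u v : V} (huv : G.Adj u v) :
    #(G.lineGraphNeighborFinset u v) ≤ G.degree u + G.degree v - 2 := by
  have hu : s(u, v) ∈ G.incidenceFinset u :=
    (G.mem_incidenceFinset _ _).2 (G.mk'_mem_incidenceSet_left_iff.2 huv)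
  have hv : s(u, v) ∈ G.incidenceFinset v :=
    (G.mem_incidenceFinset _ _).2 (G.mk'_mem_incidenceSet_right_iff.2 huv)
  have hinter : 1 ≤ #(G.incidenceFinset u ∩ G.incidenceFinset v) :=
    card_pos.2 ⟨_, mem_inter.2 ⟨hu, hv⟩⟩
  have hunion := card_union_add_card_inter (G.incidenceFinset u) (G.incidenceFinset v)
  rw [lineGraphNeighborFinset, card_erase_of_mem (mem_union_left _ hu)]
  simp only [card_incidenceFinset_eq_degree] at hunion
  omega

theorem singleton_mem_of_isDisjunct {d : ℕ} {𝒯 : Finset (Finset (Sym2 V))}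
    (htests : ∀ T ∈ 𝒯, T ⊆ G.edgeFinset ∧ ConnTest T) (hdisj : G.IsDisjunct d 𝒯)
    {u v : V} (huv : G.Adj u v) (hdeg : G.degree u + G.degree v - 2 ≤ d) :
    {s(u, v)} ∈ 𝒯 := by
  obtain ⟨T, hT, heT, hdisjoint⟩ := hdisj s(u, v) (mem_edgeFinset.2 huv) _
    (lineGraphNeighborFinset_subset_edgeFinset u v)
    ((card_lineGraphNeighborFinset_le huv).trans hdeg) (notMem_erase _ _)
  obtain ⟨hTG, hconn⟩ := htests T hT
  have hT_edges (f) (hf : f ∈ T) : f ∈ G.edgeSet := mem_edgeFinset.1 (hTG hf)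
  suffices T = {s(u, v)} from this ▸ hT
  refine hconn.eq_singleton_of_isolated (fun f hf => G.not_isDiag_of_mem_edgeSet (hT_edges f hf))
    heT fun f hf w hw hwf => ?_
  by_contra hne
  exact eq_empty_iff_forall_notMem.1 hdisjoint f
    (mem_inter.2 ⟨hf, mem_lineGraphNeighborFinset (hT_edges f hf) hw hwf hne⟩)

end SimpleGraph

/-- on a `D`-regular graph, any `d`-disjunct collection of
connected-subgraph tests with `d ≥ 2D - 2` contains every singleton `{e}`;
in particular it has at least `m` tests. -/
theorem disjunct_regular_lower_bound {V : Type*} [Fintype V] [DecidableEq V]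
    (G : SimpleGraph V) (D d : ℕ) (hreg : G.IsRegularOfDegree D)
    (𝒯 : Finset (Finset (Sym2 V)))
    (htests : ∀ T ∈ 𝒯, T ⊆ G.edgeFinset ∧ ConnTest T)
    (hd : 2 * D - 2 ≤ d)
    (hdisj : ∀ e ∈ G.edgeFinset, ∀ B ⊆ G.edgeFinset, B.card ≤ d → e ∉ B →
      ∃ T ∈ 𝒯, e ∈ T ∧ T ∩ B = ∅) :
    (∀ e ∈ G.edgeFinset, {e} ∈ 𝒯) ∧ G.edgeFinset.card ≤ 𝒯.card := by
  have hsingleton : ∀ e ∈ G.edgeFinset, {e} ∈ 𝒯 := by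
    intro e he
    induction e using Sym2.ind with
    | _ u v =>
      refine G.singleton_mem_of_isDisjunct htests hdisj (SimpleGraph.mem_edgeFinset.1 he) ?_
      rw [hreg u, hreg v]
      omega
  exact ⟨hsingleton, card_le_card_of_injOn _ hsingleton singleton_injective.injOn⟩
end

section
/- Let G = (V,E) be a finite connected D-regular graph with second-largest adjacency eigenvalue λ. Then for every A ⊆ V with |A| ≤ |V|/2, the edge boundary satisfies |∂A| ≥ ((D-λ)/2)·|A|. -/
/-!
Test the Rayleigh bound on `x = 𝟙_A - |A|/n`, which sums to zero. On a `D`-regular graph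
`∑ A_uv x_u x_v = D ‖x‖² - ½ ∑_{u ~ v} (x_u - x_v)²`; for this `x` the last sum counts
every boundary edge twice (once per orientation), and `‖x‖² = |A| (n - |A|) / n ≥ |A| / 2`.
Hence `|∂A| ≥ (D - λ) ‖x‖² ≥ (D - λ) |A| / 2` whenever `D ≥ λ`.
-/

open scoped Classical

noncomputable def edgeBdry {V : Type*} [Fintype V] [DecidableEq V]
    (G : SimpleGraph V) (A : Finset V) : Finset (Sym2 V) :=
  G.edgeFinset.filter (fun f => ∃ x ∈ A, ∃ y, y ∉ A ∧ f = s(x, y))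

open Finset Matrix

theorem sum_sum_ite_mem_eq_card {α β R : Type*} [Fintype α] [Fintype β] [DecidableEq α]
    [DecidableEq β] [AddCommMonoidWithOne R] (P : Finset (α × β)) :
    ∑ a, ∑ b, (if (a, b) ∈ P then 1 else 0 : R) = #P := by
  rw [← Fintype.sum_prod_type', sum_boole, filter_mem_eq_inter, univ_inter]

namespace SimpleGraph

variable {V : Type*} [Fintype V] [DecidableEq V] (G : SimpleGraph V) [DecidableRel G.Adj]

theorem sum_adjMatrix_mul_mul_of_isRegularOfDegree {R : Type*} [Field R] [CharZero R] {D : ℕ}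
    (hreg : G.IsRegularOfDegree D) (x : V → R) :
    ∑ u, ∑ v, G.adjMatrix R u v * x u * x v =
      D * ∑ v, x v ^ 2 - (∑ u, ∑ v, if G.Adj u v then (x u - x v) ^ 2 else 0) / 2 := by
  have hdeg : x ⬝ᵥ (G.degMatrix R *ᵥ x) = D * ∑ v, x v ^ 2 := by
    simp only [dotProduct_mulVec_degMatrix, hreg.degree_eq, mul_sum, sq, mul_assoc]
  have hadj : x ⬝ᵥ (G.adjMatrix R *ᵥ x) = ∑ u, ∑ v, G.adjMatrix R u v * x u * x v := by
    simp only [dotProduct_mulVec_adjMatrix, adjMatrix_apply, ite_mul, one_mul, zero_mul]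
  rw [← lapMatrix_toLinearMap₂', toLinearMap₂'_apply', lapMatrix, sub_mulVec, dotProduct_sub,
    hdeg, hadj, sub_sub_cancel]

theorem sum_adj_sq_indicator_sub_indicator (A : Finset V) :
    ∑ u, ∑ v, (if G.Adj u v then
      ((if u ∈ A then 1 else 0) - (if v ∈ A then 1 else 0)) ^ 2 else 0 : ℝ) =
      2 * #(G.interedges A Aᶜ) := by
  have hsymm : #(G.interedges Aᶜ A) = #(G.interedges A Aᶜ) :=
    have := G.symm
    Rel.card_interedges_comm _ _
  have hterm : ∀ u v, (if G.Adj u v then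
      ((if u ∈ A then 1 else 0) - (if v ∈ A then 1 else 0)) ^ 2 else 0 : ℝ) =
      (if (u, v) ∈ G.interedges A Aᶜ then 1 else 0) +
        (if (u, v) ∈ G.interedges Aᶜ A then 1 else 0) := by
    intro u v
    simp only [mk_mem_interedges_iff, mem_compl]
    by_cases hu : u ∈ A <;> by_cases hv : v ∈ A <;> by_cases huv : G.Adj u v <;> simp [*]
  simp only [hterm, sum_add_distrib, sum_sum_ite_mem_eq_card, hsymm]
  ring

theorem card_edgeBdry_eq_card_interedges (A : Finset V) :
    #(edgeBdry G A) = #(G.interedges A Aᶜ) := by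
  symm
  apply card_bij (fun p _ => s(p.1, p.2))
  · rintro ⟨u, v⟩ huv
    obtain ⟨hu, hv, hadj⟩ := (mk_mem_interedges_iff G).mp huv
    simp only [edgeBdry, mem_filter, mem_edgeFinset, mem_edgeSet]
    exact ⟨hadj, u, hu, v, mem_compl.mp hv, rfl⟩
  · rintro ⟨u, v⟩ huv ⟨u', v'⟩ huv' he
    rcases Sym2.eq_iff.mp he with ⟨rfl, rfl⟩ | ⟨rfl, -⟩
    · rfl
    · exact absurd ((mk_mem_interedges_iff G).mp huv).1
        (mem_compl.mp ((mk_mem_interedges_iff G).mp huv').2.1)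
  · intro e he
    simp only [edgeBdry, mem_filter, mem_edgeFinset] at he
    obtain ⟨hadj, u, hu, v, hv, rfl⟩ := he
    exact ⟨(u, v), (mk_mem_interedges_iff G).mpr ⟨hu, mem_compl.mpr hv, hadj⟩, rfl⟩

end SimpleGraph

section TestVector

variable {V : Type*} [Fintype V] [DecidableEq V] (A : Finset V)

theorem sum_indicator_sub_card_div_eq_zero (hV : Fintype.card V ≠ 0) :
    ∑ v, ((if v ∈ A then 1 else 0) - (#A / Fintype.card V : ℝ)) = 0 := by
  simp only [sum_sub_distrib, sum_boole, filter_mem_eq_inter, univ_inter, sum_const, card_univ,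
    nsmul_eq_mul]
  field_simp
  ring

theorem sum_sq_indicator_sub_card_div (hV : Fintype.card V ≠ 0) :
    ∑ v, ((if v ∈ A then 1 else 0) - (#A / Fintype.card V : ℝ)) ^ 2 =
      (#A * (Fintype.card V - #A) / Fintype.card V : ℝ) := by
  have hsq : ∀ v, ((if v ∈ A then 1 else 0) - (#A / Fintype.card V : ℝ)) ^ 2 =
      (1 - 2 * (#A / Fintype.card V : ℝ)) * (if v ∈ A then 1 else 0) +
        (#A / Fintype.card V : ℝ) ^ 2 := by
    intro v
    split_ifs <;> ring
  simp only [hsq, sum_add_distrib, ← mul_sum, sum_boole, filter_mem_eq_inter, univ_inter,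
    sum_const, card_univ, nsmul_eq_mul]
  field_simp
  ring

end TestVector

theorem cheeger_edge_expansion_general {V : Type*} [Fintype V] [DecidableEq V]
    (G : SimpleGraph V)
    (D : ℕ) (hreg : G.IsRegularOfDegree D) (lam : ℝ)
    (hlam : ∀ x : V → ℝ, (∑ v, x v) = 0 →
      (∑ u, ∑ v, (G.adjMatrix ℝ) u v * x u * x v) ≤ lam * (∑ v, (x v) ^ 2)) :
    ∀ A : Finset V, 2 * A.card ≤ Fintype.card V →
      ((D : ℝ) - lam) / 2 * A.card ≤ ((edgeBdry G A).card : ℝ) := by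
  intro A hA
  obtain rfl | hAne := A.eq_empty_or_nonempty
  · simp
  have hV : Fintype.card V ≠ 0 := (hAne.card_pos.trans_le (card_le_univ A)).ne'
  have hrayleigh := hlam _ (sum_indicator_sub_card_div_eq_zero A hV)
  rw [G.sum_adjMatrix_mul_mul_of_isRegularOfDegree hreg,
    sum_sq_indicator_sub_card_div A hV] at hrayleigh
  simp only [sub_sub_sub_cancel_right, G.sum_adj_sq_indicator_sub_indicator] at hrayleigh
  rw [G.card_edgeBdry_eq_card_interedges]
  have hhalf : (#A / 2 : ℝ) ≤ #A * (Fintype.card V - #A) / Fintype.card V := by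
    rw [le_div_iff₀ (by positivity)]
    have : (2 * #A : ℝ) ≤ Fintype.card V := by exact_mod_cast hA
    nlinarith
  rcases le_or_gt (D : ℝ) lam with hDlam | hDlam
  · have : ((D : ℝ) - lam) / 2 * #A ≤ 0 :=
      mul_nonpos_of_nonpos_of_nonneg (by linarith) (by positivity)
    linarith [(#(G.interedges A Aᶜ)).cast_nonneg (α := ℝ)]
  · calc ((D : ℝ) - lam) / 2 * #A = (D - lam) * (#A / 2) := by ring
      _ ≤ (D - lam) * (#A * (Fintype.card V - #A) / Fintype.card V) := by gcongr
      _ ≤ #(G.interedges A Aᶜ) := by linarith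

/-- one side of discrete Cheeger: if `G` is connected and `D`-regular
and `lam` is its second-largest adjacency eigenvalue — characterized variationally by
the Rayleigh-quotient bound on the orthogonal complement of the all-ones vector —
then every `A` with `|A| ≤ |V|/2` satisfies `|∂A| ≥ ((D - lam)/2)·|A|`. -/
theorem cheeger_edge_expansion {V : Type*} [Fintype V] [DecidableEq V]
    (G : SimpleGraph V) (hconn : G.Connected)
    (D : ℕ) (hreg : G.IsRegularOfDegree D) (lam : ℝ)
    (hlam : ∀ x : V → ℝ, (∑ v, x v) = 0 →
      (∑ u, ∑ v, (G.adjMatrix ℝ) u v * x u * x v) ≤ lam * (∑ v, (x v) ^ 2)) :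
    ∀ A : Finset V, 2 * A.card ≤ Fintype.card V →
      ((D : ℝ) - lam) / 2 * A.card ≤ ((edgeBdry G A).card : ℝ) :=
  cheeger_edge_expansion_general G D hreg lam hlam
end
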